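/- If x is infinitely differentiable on [-1,1] and there exists c > 0 with ‖x^{(m)}‖ ≤ c^m for all m, then for every N ≥ 2, inf_{p ∈ P_N} ‖x − p‖ ≤ (2/(ec))·(6ec/N)^N. -/
import Mathlib

open Polynomial Nat

lemma pow_self_le_factorial_mul_exp (n : ℕ) :
    (n : ℝ) ^ n ≤ (n ! : ℝ) * Real.exp 1 ^ n := by
  induction n with
  | zero => simp
  | succ m ih =>
    rcases Nat.eq_zero_or_pos m with hm | hm
    · subst hm
      have h2 : (2 : ℝ) ≤ Real.exp 1 := by
        have := Real.add_one_le_exp (1 : ℝ); linarith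
      simp [Nat.factorial]
    · have hmR : (0 : ℝ) < m := by exact_mod_cast hm
      have h1 : (1 + 1 / (m : ℝ)) ≤ Real.exp (1 / m) := by
        have := Real.add_one_le_exp (1 / (m : ℝ)); linarith
      have h2 : (1 + 1 / (m : ℝ)) ^ m ≤ Real.exp (1 / m) ^ m := by
        apply pow_le_pow_left₀ (by positivity) h1
      have h3 : Real.exp (1 / (m : ℝ)) ^ m = Real.exp 1 := by
        rw [← Real.exp_nat_mul]
        congr 1
        field_simp
      have h4 : ((m : ℝ) + 1) ^ m ≤ (m : ℝ) ^ m * Real.exp 1 := by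
        have : ((m : ℝ) + 1) ^ m = (m : ℝ) ^ m * (1 + 1 / (m : ℝ)) ^ m := by
          rw [← mul_pow]; congr 1; field_simp
        rw [this, ← h3]
        exact mul_le_mul_of_nonneg_left h2 (by positivity)
      have hexp : (0 : ℝ) < Real.exp 1 := Real.exp_pos 1
      have key : ((m : ℝ) + 1) ^ (m + 1) ≤ ((m : ℝ) + 1) * ((m : ℝ) ^ m * Real.exp 1) := by
        rw [pow_succ, mul_comm]
        exact mul_le_mul_of_nonneg_left h4 (by positivity)
      calc ((m + 1 : ℕ) : ℝ) ^ (m + 1) = ((m : ℝ) + 1) ^ (m + 1) := by push_cast; ring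
        _ ≤ ((m : ℝ) + 1) * ((m : ℝ) ^ m * Real.exp 1) := key
        _ ≤ ((m : ℝ) + 1) * (((m ! : ℕ) : ℝ) * Real.exp 1 ^ m * Real.exp 1) := by
            apply mul_le_mul_of_nonneg_left _ (by positivity)
            exact mul_le_mul_of_nonneg_right ih (le_of_lt hexp)
        _ = (((m + 1)! : ℕ) : ℝ) * Real.exp 1 ^ (m + 1) := by
            rw [Nat.factorial_succ]; push_cast; ring

lemma sq_le_aux (M : ℕ) : ((M + 2 : ℕ) : ℝ) ^ 2 ≤ 36 * 3 ^ (M + 1) := by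
  have : (M + 2) ^ 2 ≤ 36 * 3 ^ (M + 1) := by
    induction M with
    | zero => norm_num
    | succ k ih =>
      have h3 : (k + 3) ^ 2 ≤ 3 * (k + 2) ^ 2 := by nlinarith [k.zero_le, Nat.zero_le (k*k)]
      calc (k + 1 + 2) ^ 2 ≤ 3 * (k + 2) ^ 2 := h3
        _ ≤ 3 * (36 * 3 ^ (k + 1)) := Nat.mul_le_mul_left 3 ih
        _ = 36 * 3 ^ (k + 1 + 1) := by ring
  exact_mod_cast this

/-- If `x` is infinitely differentiable on `[-1,1]` and there exists `c > 0` with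
`‖x⁽ᵐ⁾‖ ≤ c^m` for all `m`, then for every `N ≥ 2`,
`inf_{p ∈ P_N} ‖x - p‖ ≤ (2/(e c)) (6 e c / N)^N` in the sup-norm on `[-1,1]`. -/
theorem best_approx_exponential_decay
    (x : ℝ → ℝ) (hx : ContDiffOn ℝ (⊤ : ℕ∞) x (Set.Icc (-1 : ℝ) 1))
    (c : ℝ) (hc : 0 < c)
    (hder : ∀ m : ℕ,
      (⨆ t : Set.Icc (-1 : ℝ) 1,
        |iteratedDerivWithin m x (Set.Icc (-1 : ℝ) 1) t|) ≤ c ^ m) :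
    ∀ N : ℕ, 2 ≤ N →
      sInf {E : ℝ | ∃ p : ℝ[X], p.natDegree ≤ N ∧
          E = ⨆ t : Set.Icc (-1 : ℝ) 1, |x t - p.eval (t : ℝ)|} ≤
        (2 / (Real.exp 1 * c)) * (6 * Real.exp 1 * c / N) ^ N := by
  intro N hN
  set s : Set ℝ := Set.Icc (-1 : ℝ) 1 with hs
  haveI : Nonempty ↥s := Set.Nonempty.to_subtype (by norm_num [hs])
  have hsub : UniqueDiffOn ℝ s := uniqueDiffOn_Icc (by norm_num)
  set e := Real.exp 1 with he
  have he1 : (2 : ℝ) ≤ e := by have := Real.add_one_le_exp (1 : ℝ); simp [he]; linarith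
  have hepos : (0 : ℝ) < e := by linarith
  set S := {E : ℝ | ∃ p : ℝ[X], p.natDegree ≤ N ∧
      E = ⨆ t : s, |x t - p.eval (t : ℝ)|} with hS
  have hbdd : BddBelow S := by
    refine ⟨0, fun E hE => ?_⟩
    obtain ⟨p, _, rfl⟩ := hE
    exact Real.iSup_nonneg fun t => abs_nonneg _
  have key : ∀ p : ℝ[X], p.natDegree ≤ N →
      sInf S ≤ ⨆ t : s, |x t - p.eval (t : ℝ)| :=
    fun p hp => csInf_le hbdd ⟨p, hp, rfl⟩
  -- pointwise derivative bounds
  have hpt : ∀ m : ℕ, ∀ t : s, |iteratedDerivWithin m x s t| ≤ c ^ m := by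
    intro m t
    have hcont : ContinuousOn (iteratedDerivWithin m x s) s :=
      hx.continuousOn_iteratedDerivWithin (by exact_mod_cast le_top) hsub
    have hb : BddAbove (Set.range fun t : s => |iteratedDerivWithin m x s t|) := by
      have : BddAbove ((fun y => |iteratedDerivWithin m x s y|) '' s) :=
        (isCompact_Icc.image_of_continuousOn hcont.abs).bddAbove
      rwa [Set.image_eq_range] at this
    exact le_trans (le_ciSup hb t) (hder m)
  obtain ⟨M, hM⟩ : ∃ M, N = M + 2 := ⟨N - 2, by omega⟩
  subst hM
  set N := M + 2 with hNdef
  have hNpos : (0 : ℝ) < (N : ℝ) := by positivity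
  have hNN : (0 : ℝ) < (N : ℝ) ^ N := by positivity
  set R := (2 / (e * c)) * (6 * e * c / (N : ℝ)) ^ N with hR
  have hRform : R = 2 * 6 ^ N * e ^ (M + 1) * c ^ (M + 1) / (N : ℝ) ^ N := by
    rw [hR, div_pow, mul_pow, mul_pow, hNdef]
    field_simp
    ring
  by_cases hcase : c ^ (N + 1) * 2 ^ (N + 1) / (N ! : ℝ) ≤ R
  · -- Taylor polynomial works
    set p : ℝ[X] := ∑ i ∈ Finset.range (N + 1),
        C (iteratedDerivWithin i x s (-1) * ((i ! : ℝ))⁻¹) * (X + 1) ^ i with hp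
    have hdeg : p.natDegree ≤ N := by
      apply natDegree_sum_le_of_forall_le
      intro i hi
      refine le_trans (natDegree_C_mul_le _ _) ?_
      refine le_trans (natDegree_pow_le) ?_
      have hi' : i ≤ N := by
        have := Finset.mem_range.mp hi; omega
      calc i * (X + 1 : ℝ[X]).natDegree ≤ i * 1 := by
            exact Nat.mul_le_mul_left i (natDegree_add_le_of_degree_le natDegree_X_le (by simp))
        _ ≤ N := by omega
    have heval : ∀ t : ℝ, p.eval t = taylorWithinEval x N s (-1) t := by
      intro t
      rw [taylor_within_apply, hp, eval_finset_sum]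
      apply Finset.sum_congr rfl
      intro i _
      simp [smul_eq_mul]
      ring
    have hbound : ∀ t : s, |x t - p.eval (t : ℝ)| ≤ c ^ (N + 1) * 2 ^ (N + 1) / (N ! : ℝ) := by
      intro t
      have ht : (t : ℝ) ∈ Set.Icc (-1 : ℝ) 1 := t.2
      have hC : ∀ y ∈ Set.Icc (-1 : ℝ) 1,
          ‖iteratedDerivWithin (N + 1) x (Set.Icc (-1 : ℝ) 1) y‖ ≤ c ^ (N + 1) := by
        intro y hy
        simpa [Real.norm_eq_abs] using hpt (N + 1) ⟨y, hy⟩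
      have htay := taylor_mean_remainder_bound (f := x) (a := -1) (b := 1)
        (C := c ^ (N + 1)) (n := N) (by norm_num) (hx.of_le (by exact_mod_cast le_top)) ht hC
      rw [heval]
      refine le_trans (by simpa [Real.norm_eq_abs, hs] using htay) ?_
      have h1 : ((t : ℝ) + 1) ^ (N + 1) ≤ 2 ^ (N + 1) := by
        apply pow_le_pow_left₀ (by linarith [ht.1]) (by linarith [ht.2])
      have hfac : (0 : ℝ) < (N ! : ℝ) := by positivity
      exact (div_le_div_iff_of_pos_right hfac).mpr (mul_le_mul_of_nonneg_left h1 (by positivity))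
    refine le_trans (key p hdeg) (le_trans (ciSup_le hbound) hcase)
  · -- p = 0 works since R ≥ 1
    push_neg at hcase
    have hfac : (0 : ℝ) < (N ! : ℝ) := by positivity
    rw [hRform] at hcase
    rw [div_lt_div_iff₀ hNN hfac] at hcase
    have hsplit : c ^ (N + 1) * 2 ^ (N + 1) * (N : ℝ) ^ N
        = (c ^ 2 * 2 ^ (N + 1) * (N : ℝ) ^ N) * c ^ (M + 1) := by
      rw [hNdef]; ring
    have hsplit2 : 2 * 6 ^ N * e ^ (M + 1) * c ^ (M + 1) * (N ! : ℝ)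
        = (2 * 6 ^ N * e ^ (M + 1) * (N ! : ℝ)) * c ^ (M + 1) := by ring
    rw [hsplit, hsplit2] at hcase
    have hcpow : (0 : ℝ) < c ^ (M + 1) := by positivity
    have hc2 : 2 * 6 ^ N * e ^ (M + 1) * (N ! : ℝ) < c ^ 2 * 2 ^ (N + 1) * (N : ℝ) ^ N :=
      lt_of_mul_lt_mul_right hcase (le_of_lt hcpow)
    -- derive 3^N ≤ c^2 * e
    have hNF : ((N : ℝ)) ^ N ≤ (N ! : ℝ) * e ^ N := pow_self_le_factorial_mul_exp N
    have h3 : (3 : ℝ) ^ N ≤ c ^ 2 * e := by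
      have step : c ^ 2 * 2 ^ (N + 1) * (N : ℝ) ^ N ≤ c ^ 2 * 2 ^ (N + 1) * ((N ! : ℝ) * e ^ N) :=
        mul_le_mul_of_nonneg_left hNF (by positivity)
      have h6 : 2 * 6 ^ N * e ^ (M + 1) * (N ! : ℝ) < c ^ 2 * 2 ^ (N + 1) * ((N ! : ℝ) * e ^ N) :=
        lt_of_lt_of_le hc2 step
      have hrw1 : c ^ 2 * 2 ^ (N + 1) * ((N ! : ℝ) * e ^ N)
          = (c ^ 2 * e * (2 * 2 ^ N) * e ^ (M + 1)) * (N ! : ℝ) := by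
        rw [hNdef]; ring
      have hrw2 : 2 * 6 ^ N * e ^ (M + 1) * (N ! : ℝ)
          = (2 * 6 ^ N * e ^ (M + 1)) * (N ! : ℝ) := by ring
      rw [hrw1, hrw2] at h6
      have h7 : 2 * 6 ^ N * e ^ (M + 1) < c ^ 2 * e * (2 * 2 ^ N) * e ^ (M + 1) :=
        lt_of_mul_lt_mul_right h6 (le_of_lt hfac)
      have hee : (0 : ℝ) < e ^ (M + 1) := by positivity
      have h8 : 2 * 6 ^ N < c ^ 2 * e * (2 * 2 ^ N) :=
        lt_of_mul_lt_mul_right h7 (le_of_lt hee)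
      have h66 : (6 : ℝ) ^ N = 3 ^ N * 2 ^ N := by
        rw [← mul_pow]; norm_num
      nlinarith [pow_pos (show (0:ℝ) < 2 by norm_num) N, pow_pos (show (0:ℝ) < 3 by norm_num) N]
    -- now show 1 ≤ R
    have hRpos : (0 : ℝ) < R := by
      rw [hRform]; positivity
    have hR1 : (1 : ℝ) ≤ R := by
      have hgoal : (N : ℝ) ^ N ≤ 2 * 6 ^ N * e ^ (M + 1) * c ^ (M + 1) := by
        have hsq : ((N : ℝ) ^ N) ^ 2 ≤ (2 * 6 ^ N * e ^ (M + 1) * c ^ (M + 1)) ^ 2 := by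
          have e1 : ((N : ℝ) ^ N) ^ 2 = ((N : ℝ) ^ 2) ^ N := by
            rw [← pow_mul, ← pow_mul, mul_comm]
          have e2 : ((N : ℝ) ^ 2) ^ N ≤ (36 * 3 ^ (M + 1)) ^ N :=
            pow_le_pow_left₀ (sq_nonneg _) (sq_le_aux M) N
          have e3 : (36 * 3 ^ (M + 1) : ℝ) ^ N = 36 ^ N * 3 ^ ((M + 1) * N) := by
            rw [mul_pow, ← pow_mul]
          have e4 : (2 * 6 ^ N * e ^ (M + 1) * c ^ (M + 1)) ^ 2
              = 4 * 36 ^ N * e ^ (2 * (M + 1)) * (c ^ 2) ^ (M + 1) := by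
            have h36 : (36 : ℝ) ^ N = (6 ^ N) ^ 2 := by
              rw [← pow_mul, mul_comm, pow_mul]; norm_num
            rw [h36]; ring
          have e5 : ((3:ℝ) ^ N / e) ^ (M + 1) ≤ (c ^ 2) ^ (M + 1) := by
            apply pow_le_pow_left₀ (by positivity)
            rw [div_le_iff₀ hepos] at *
            linarith [h3]
          have e6 : 4 * 36 ^ N * e ^ (2 * (M + 1)) * ((3:ℝ) ^ N / e) ^ (M + 1)
              = 4 * 36 ^ N * 3 ^ (N * (M + 1)) * e ^ (M + 1) := by
            rw [div_pow, ← pow_mul]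
            have hene : e ^ (M + 1) ≠ 0 := by positivity
            field_simp
            rw [show 2 * (M + 1) = (M + 1) + (M + 1) by ring, pow_add]
            ring
          have e7 : (1 : ℝ) ≤ 4 * e ^ (M + 1) := by
            have : (1 : ℝ) ≤ e ^ (M + 1) := one_le_pow₀ (by linarith)
            linarith
          calc ((N : ℝ) ^ N) ^ 2 = ((N : ℝ) ^ 2) ^ N := e1
            _ ≤ (36 * 3 ^ (M + 1)) ^ N := e2
            _ = 36 ^ N * 3 ^ ((M + 1) * N) := e3
            _ ≤ 4 * 36 ^ N * 3 ^ (N * (M + 1)) * e ^ (M + 1) := by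
                rw [mul_comm (M + 1) N]
                have hab : (0:ℝ) ≤ 36 ^ N * 3 ^ (N * (M + 1)) := by positivity
                calc (36:ℝ) ^ N * 3 ^ (N * (M + 1))
                    = (36 ^ N * 3 ^ (N * (M + 1))) * 1 := by ring
                  _ ≤ (36 ^ N * 3 ^ (N * (M + 1))) * (4 * e ^ (M + 1)) :=
                      mul_le_mul_of_nonneg_left e7 hab
                  _ = 4 * 36 ^ N * 3 ^ (N * (M + 1)) * e ^ (M + 1) := by ring
            _ = 4 * 36 ^ N * e ^ (2 * (M + 1)) * ((3:ℝ) ^ N / e) ^ (M + 1) := e6.symm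
            _ ≤ 4 * 36 ^ N * e ^ (2 * (M + 1)) * (c ^ 2) ^ (M + 1) := by
                apply mul_le_mul_of_nonneg_left e5 (by positivity)
            _ = (2 * 6 ^ N * e ^ (M + 1) * c ^ (M + 1)) ^ 2 := e4.symm
        have hA : (0 : ℝ) ≤ (N : ℝ) ^ N := le_of_lt hNN
        have hB : (0 : ℝ) ≤ 2 * 6 ^ N * e ^ (M + 1) * c ^ (M + 1) := by positivity
        exact (pow_le_pow_iff_left₀ hA hB (by norm_num)).mp hsq
      rw [hRform, le_div_iff₀ hNN]
      linarith
    have h0 : (0 : ℝ[X]).natDegree ≤ N := by simp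
    refine le_trans (key 0 h0) ?_
    have hsup : (⨆ t : s, |x t - (0:ℝ[X]).eval (t : ℝ)|) ≤ 1 := by
      refine ciSup_le fun t => ?_
      have := hpt 0 t
      simpa [iteratedDerivWithin_zero] using this
    linarith
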